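/- arXiv:2510.25442 — 2 statements merged into one kernel-verified Lean document; each statement's English description precedes it below -/
import Mathlib

section
/- Let X ⊆ 𝕋^d be a Latin hypercube set with N points having a single distance vector, and let f : 𝕋 → (0,∞) be a potential such that g = log f is N-equispacing. Then E_F(Y) ≥ E_F(X) for all N-point configurations Y ⊆ 𝕋^d. In other words, X minimizes the tensor product energy with potential f among all N-point configurations on 𝕋^d. -/
open Finset Real

/-- Pairwise interaction energy of `N` points on the circle `𝕋 = ℝ/ℤ ≃ [0,1)`:
`E_g(y^0,…,y^{N-1}) = Σ_{k ≠ ℓ} g(y^k − y^ℓ)`. -/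
noncomputable def energy1 {N : ℕ} (g : ℝ → ℝ) (y : Fin N → ℝ) : ℝ :=
  ∑ k : Fin N, ∑ ℓ : Fin N, if k = ℓ then 0 else g (y k - y ℓ)

/-- Tensor product energy of `N` points in `𝕋^d ≃ [0,1)^d`:
`E_F(Y) = Σ_{k ≠ ℓ} ∏_i f(y_i^k − y_i^ℓ)`. -/
noncomputable def energyProd {N d : ℕ} (f : ℝ → ℝ) (y : Fin N → Fin d → ℝ) : ℝ :=
  ∑ k : Fin N, ∑ ℓ : Fin N, if k = ℓ then 0 else ∏ i : Fin d, f (y k i - y ℓ i)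

/-- A (1-periodic, even) function `g` is `N`-equispacing if the `N` equispaced
points minimize the energy `E_g` on the circle. -/
def NEquispacing (N : ℕ) (g : ℝ → ℝ) : Prop :=
  ∀ y : Fin N → ℝ, (∀ k, y k ∈ Set.Ico (0 : ℝ) 1) →
    energy1 g y ≥ energy1 g (fun k : Fin N => ((k : ℕ) : ℝ) / N)

/-- Geodesic distance on the torus `𝕋 = ℝ/ℤ ≃ [0,1)`:
`δ(x,y) = min{|x−y|, 1−|x−y|}`. -/
noncomputable def torusDist (x y : ℝ) : ℝ := min |x - y| (1 - |x - y|)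

/-- The distance vector of two points of `𝕋^d`, as the (unordered) multiset of
coordinatewise geodesic distances; this encodes the vector
`(δ(x_i, y_i))_{i=1}^d` sorted in increasing order. -/
noncomputable def distVec {d : ℕ} (x y : Fin d → ℝ) : Multiset ℝ :=
  Multiset.map (fun i => torusDist (x i) (y i)) Finset.univ.val

/-- A configuration has a single distance vector if all pairs of distinct
points have the same distance vector. -/
def singleDistVec {N d : ℕ} (x : Fin N → Fin d → ℝ) : Prop :=
  ∀ k ℓ k' ℓ' : Fin N, k ≠ ℓ → k' ≠ ℓ' → distVec (x k) (x ℓ) = distVec (x k') (x ℓ')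

private lemma f_torus {f : ℝ → ℝ} (hf_per : Function.Periodic f 1)
    (hf_even : ∀ t, f t = f (1 - t)) {u v : ℝ}
    (hu : u ∈ Set.Ico (0:ℝ) 1) (hv : v ∈ Set.Ico (0:ℝ) 1) :
    f (u - v) = f (torusDist u v) := by
  have hneg : ∀ t : ℝ, f (-t) = f t := by
    intro t
    have h1 : f (-t + 1) = f (-t) := hf_per (-t)
    have h2 : (-t + 1 : ℝ) = 1 - t := by ring
    rw [h2] at h1
    rw [← h1, ← hf_even]
  have habs : f (u - v) = f |u - v| := by
    rcases le_or_gt 0 (u - v) with h | h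
    · rw [abs_of_nonneg h]
    · rw [abs_of_neg h, hneg]
  unfold torusDist
  rcases min_choice |u - v| (1 - |u - v|) with h | h <;> rw [h]
  · exact habs
  · rw [habs, hf_even]

private lemma energy1_perm {N : ℕ} (g : ℝ → ℝ) (e : Equiv.Perm (Fin N)) (y : Fin N → ℝ) :
    energy1 g (fun k => y (e k)) = energy1 g y := by
  unfold energy1
  calc ∑ k : Fin N, ∑ ℓ : Fin N, (if k = ℓ then 0 else g (y (e k) - y (e ℓ)))
      = ∑ k : Fin N, ∑ ℓ : Fin N, (if e k = e ℓ then 0 else g (y (e k) - y (e ℓ))) := by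
        simp only [Equiv.apply_eq_iff_eq]
    _ = ∑ k : Fin N, ∑ ℓ : Fin N, (if e k = ℓ then 0 else g (y (e k) - y ℓ)) :=
        Finset.sum_congr rfl fun k _ =>
          Equiv.sum_comp e (fun ℓ => if e k = ℓ then 0 else g (y (e k) - y ℓ))
    _ = ∑ k : Fin N, ∑ ℓ : Fin N, (if k = ℓ then 0 else g (y k - y ℓ)) :=
        Equiv.sum_comp e (fun k => ∑ ℓ, if k = ℓ then 0 else g (y k - y ℓ))

/-- Universal optimality of Latin hypercube sets with a single distance
vector: if `X ⊆ 𝕋^d` is an `N`-point Latin hypercube set with a single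
distance vector and `f : 𝕋 → (0,∞)` is a potential such that `g = log f` is
`N`-equispacing, then `E_F(Y) ≥ E_F(X)` for every `N`-point configuration
`Y ⊆ 𝕋^d`. -/
theorem latin_hypercube_single_distVec_minimizes (N d : ℕ) (f : ℝ → ℝ)
    (hf_pos : ∀ t, 0 < f t)
    (hf_per : Function.Periodic f 1)
    (hf_even : ∀ t, f t = f (1 - t))
    (σ : Fin d → Equiv.Perm (Fin N))
    (x : Fin N → Fin d → ℝ)
    (hx : ∀ k i, x k i = ((σ i k : ℕ) : ℝ) / N)
    (hsingle : singleDistVec x)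
    (hequi : NEquispacing N (fun t => Real.log (f t))) :
    ∀ y : Fin N → Fin d → ℝ, (∀ k i, y k i ∈ Set.Ico (0 : ℝ) 1) →
      energyProd f y ≥ energyProd f x := by
  intro y hy
  by_cases hN : N ≤ 1
  · haveI : Subsingleton (Fin N) := ⟨fun a b => Fin.ext (by omega)⟩
    have hz : ∀ z : Fin N → Fin d → ℝ, energyProd f z = 0 := by
      intro z
      refine Finset.sum_eq_zero fun k _ => Finset.sum_eq_zero fun ℓ _ => ?_
      simp [Subsingleton.elim k ℓ]
    rw [hz y, hz x]
  · push_neg at hN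
    have hN0 : 0 < (N : ℝ) := by exact_mod_cast Nat.lt_of_lt_of_le Nat.zero_lt_one hN.le
    set g : ℝ → ℝ := fun t => Real.log (f t) with hg
    have hxIco : ∀ k i, x k i ∈ Set.Ico (0:ℝ) 1 := by
      intro k i
      rw [hx]
      constructor
      · positivity
      · rw [div_lt_one hN0]
        exact_mod_cast (σ i k).isLt
    set k0 : Fin N := ⟨0, by omega⟩ with hk0
    set k1 : Fin N := ⟨1, hN⟩ with hk1
    have hk01 : k0 ≠ k1 := by
      intro h
      have := congrArg Fin.val h
      simp [hk0, hk1] at this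
    set C : ℝ := ∏ i : Fin d, f (x k0 i - x k1 i) with hCdef
    have hC : 0 < C := Finset.prod_pos fun i _ => hf_pos _
    set c : ℝ := Real.log C with hcdef
    -- the product over coordinates only depends on the distance vector
    have prodDist : ∀ k ℓ : Fin N,
        ∏ i : Fin d, f (x k i - x ℓ i) = (Multiset.map f (distVec (x k) (x ℓ))).prod := by
      intro k ℓ
      have h1 : ∏ i : Fin d, f (x k i - x ℓ i)
          = ∏ i : Fin d, f (torusDist (x k i) (x ℓ i)) :=
        Finset.prod_congr rfl fun i _ => f_torus hf_per hf_even (hxIco k i) (hxIco ℓ i)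
      rw [h1, Finset.prod_eq_multiset_prod]
      unfold distVec
      rw [Multiset.map_map]
      rfl
    have constProd : ∀ k ℓ : Fin N, k ≠ ℓ → ∏ i : Fin d, f (x k i - x ℓ i) = C := by
      intro k ℓ hkl
      rw [prodDist k ℓ, hsingle k ℓ k0 k1 hkl hk01, ← prodDist k0 k1]
    have hEX : energyProd f x = ∑ k : Fin N, ∑ ℓ : Fin N, if k = ℓ then 0 else C := by
      unfold energyProd
      refine Finset.sum_congr rfl fun k _ => Finset.sum_congr rfl fun ℓ _ => ?_
      by_cases h : k = ℓ
      · simp [h]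
      · simp only [h, if_false]
        exact constProd k ℓ h
    have hlog : ∀ t : Fin d → ℝ, ∏ i : Fin d, f (t i) = Real.exp (∑ i : Fin d, g (t i)) := by
      intro t
      rw [Real.exp_sum]
      refine Finset.prod_congr rfl fun i _ => ?_
      rw [hg]
      exact (Real.exp_log (hf_pos _)).symm
    have hc : ∀ k ℓ : Fin N, k ≠ ℓ → ∑ i : Fin d, g (x k i - x ℓ i) = c := by
      intro k ℓ h
      have : Real.exp (∑ i : Fin d, g (x k i - x ℓ i)) = C := by
        rw [← hlog (fun i => x k i - x ℓ i)]
        exact constProd k ℓ h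
      rw [← Real.log_exp (∑ i : Fin d, g (x k i - x ℓ i)), this]
    have hswap : ∀ z : Fin N → Fin d → ℝ,
        (∑ k : Fin N, ∑ ℓ : Fin N, if k = ℓ then 0 else ∑ i : Fin d, g (z k i - z ℓ i))
          = ∑ i : Fin d, energy1 g (fun k => z k i) := by
      intro z
      have h1 : ∀ k ℓ : Fin N,
          (if k = ℓ then 0 else ∑ i : Fin d, g (z k i - z ℓ i))
            = ∑ i : Fin d, (if k = ℓ then 0 else g (z k i - z ℓ i)) := by
        intro k ℓ
        split
        · simp
        · rfl
      simp only [h1]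
      unfold energy1
      calc ∑ k : Fin N, ∑ ℓ : Fin N, ∑ i : Fin d, (if k = ℓ then 0 else g (z k i - z ℓ i))
          = ∑ k : Fin N, ∑ i : Fin d, ∑ ℓ : Fin N, (if k = ℓ then 0 else g (z k i - z ℓ i)) :=
            Finset.sum_congr rfl fun k _ => Finset.sum_comm
        _ = ∑ i : Fin d, ∑ k : Fin N, ∑ ℓ : Fin N, (if k = ℓ then 0 else g (z k i - z ℓ i)) :=
            Finset.sum_comm
    have hAX : (∑ k : Fin N, ∑ ℓ : Fin N, if k = ℓ then (0:ℝ) else c)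
        = ∑ i : Fin d, energy1 g (fun k => x k i) := by
      rw [← hswap x]
      refine Finset.sum_congr rfl fun k _ => Finset.sum_congr rfl fun ℓ _ => ?_
      by_cases h : k = ℓ
      · simp [h]
      · simp only [h, if_false]
        exact (hc k ℓ h).symm
    have hXequi : ∀ i, energy1 g (fun k => x k i)
        = energy1 g (fun k : Fin N => ((k : ℕ) : ℝ) / N) := by
      intro i
      have hfn : (fun k => x k i)
          = (fun k => (fun m : Fin N => ((m : ℕ) : ℝ) / N) (σ i k)) := by
        funext k
        exact hx k i
      rw [hfn]
      exact energy1_perm g (σ i) (fun m : Fin N => ((m : ℕ) : ℝ) / N)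
    have hmono : (∑ k : Fin N, ∑ ℓ : Fin N, if k = ℓ then (0:ℝ) else c)
        ≤ ∑ k : Fin N, ∑ ℓ : Fin N, if k = ℓ then 0 else ∑ i : Fin d, g (y k i - y ℓ i) := by
      rw [hAX, hswap y]
      refine Finset.sum_le_sum fun i _ => ?_
      rw [hXequi i]
      exact hequi (fun k => y k i) (fun k => hy k i)
    have hEY : energyProd f y = ∑ k : Fin N, ∑ ℓ : Fin N,
        if k = ℓ then 0 else Real.exp (∑ i : Fin d, g (y k i - y ℓ i)) := by
      unfold energyProd
      refine Finset.sum_congr rfl fun k _ => Finset.sum_congr rfl fun ℓ _ => ?_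
      by_cases h : k = ℓ
      · simp [h]
      · simp only [h, if_false]
        exact hlog _
    have step1 : (∑ k : Fin N, ∑ ℓ : Fin N,
        if k = ℓ then 0 else C * (1 + ((∑ i : Fin d, g (y k i - y ℓ i)) - c)))
        ≤ energyProd f y := by
      rw [hEY]
      refine Finset.sum_le_sum fun k _ => Finset.sum_le_sum fun ℓ _ => ?_
      by_cases h : k = ℓ
      · simp [h]
      · simp only [h, if_false]
        set a := ∑ i : Fin d, g (y k i - y ℓ i) with ha
        calc C * (1 + (a - c)) ≤ C * Real.exp (a - c) := by
              refine mul_le_mul_of_nonneg_left ?_ hC.le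
              linarith [Real.add_one_le_exp (a - c)]
          _ = Real.exp a := by
              rw [Real.exp_sub, hcdef, Real.exp_log hC]
              field_simp
    have step2 : (∑ k : Fin N, ∑ ℓ : Fin N,
        if k = ℓ then 0 else C * (1 + ((∑ i : Fin d, g (y k i - y ℓ i)) - c)))
        = (∑ k : Fin N, ∑ ℓ : Fin N, if k = ℓ then (0:ℝ) else C)
          + C * ((∑ k : Fin N, ∑ ℓ : Fin N, if k = ℓ then 0
              else ∑ i : Fin d, g (y k i - y ℓ i))
            - (∑ k : Fin N, ∑ ℓ : Fin N, if k = ℓ then (0:ℝ) else c)) := by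
      have hpt : ∀ k ℓ : Fin N,
          (if k = ℓ then 0 else C * (1 + ((∑ i : Fin d, g (y k i - y ℓ i)) - c)))
            = (if k = ℓ then (0:ℝ) else C)
              + (C * (if k = ℓ then 0 else ∑ i : Fin d, g (y k i - y ℓ i))
                - C * (if k = ℓ then (0:ℝ) else c)) := by
        intro k ℓ
        split <;> ring
      simp only [hpt, Finset.sum_add_distrib, Finset.sum_sub_distrib, ← Finset.mul_sum]
      ring
    calc energyProd f x
        = ∑ k : Fin N, ∑ ℓ : Fin N, if k = ℓ then (0:ℝ) else C := hEX
      _ ≤ (∑ k : Fin N, ∑ ℓ : Fin N, if k = ℓ then (0:ℝ) else C)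
          + C * ((∑ k : Fin N, ∑ ℓ : Fin N, if k = ℓ then 0
              else ∑ i : Fin d, g (y k i - y ℓ i))
            - (∑ k : Fin N, ∑ ℓ : Fin N, if k = ℓ then (0:ℝ) else c)) :=
          le_add_of_nonneg_right (mul_nonneg hC.le (sub_nonneg.mpr hmono))
      _ = _ := step2.symm
      _ ≤ energyProd f y := step1
end

section
/- Let f : 𝕋 → (0,∞) be a potential such that log f is 5-equispacing (in particular this holds if f is decreasing and logarithmically convex on (0,1/2], or if f(t) = h(cos(2πt)) with log h absolutely monotone on [−1,1)). Then the 5-point Fibonacci lattice Φ_5 = {(0,0), (1/5,3/5), (2/5,1/5), (3/5,4/5), (4/5,2/5)} ⊂ 𝕋² satisfies E_F(Y) ≥ E_F(Φ_5) = 20 f(1/5) f(2/5) for every 5-point configuration Y ⊆ 𝕋². -/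
open Finset Real

/-- The 5-point Fibonacci lattice
`Φ_5 = {(0,0), (1/5,3/5), (2/5,1/5), (3/5,4/5), (4/5,2/5)} ⊂ 𝕋²`. -/
noncomputable def fibonacci5 : Fin 5 → Fin 2 → ℝ :=
  ![![0, 0], ![1/5, 3/5], ![2/5, 1/5], ![3/5, 4/5], ![4/5, 2/5]]

/-! Each pair term of `E_F(Y)` is `exp` of `∑ᵢ log f(y_i^k − y_i^ℓ)`. Bounding `exp` below by its
tangent line at the mean exponent `m` gives `E_F(Y) ≥ 20 exp m`, and summing the exponents over the
pairs gives the sum over both coordinates of the one-dimensional energies of `log f`. Each of these is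
at least the energy `10 log f(1/5) + 10 log f(2/5)` of the equispaced points, so
`E_F(Y) ≥ 20 f(1/5) f(2/5)`. Equality holds for `Φ_5`: every difference vector of `Φ_5` has one
coordinate `≡ ±1/5` and the other `≡ ±2/5` modulo `1`. -/

theorem card_mul_exp_le_sum_exp {ι : Type*} (s : Finset ι) (x : ι → ℝ) {m : ℝ}
    (h : s.card * m ≤ ∑ i ∈ s, x i) : s.card * exp m ≤ ∑ i ∈ s, exp (x i) := by
  have tangent : ∀ i, exp m * (x i - m + 1) ≤ exp (x i) := fun i => by
    simpa [← exp_add] using mul_le_mul_of_nonneg_left (add_one_le_exp (x i - m)) (exp_pos m).le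
  calc s.card * exp m ≤ exp m * (∑ i ∈ s, x i - s.card * m + s.card) := by nlinarith [exp_pos m]
    _ = ∑ i ∈ s, exp m * (x i - m + 1) := by
      simp only [← mul_sum, sum_add_distrib, sum_sub_distrib, sum_const, nsmul_eq_mul]; ring
    _ ≤ ∑ i ∈ s, exp (x i) := sum_le_sum fun i _ => tangent i

theorem sum_sum_ite_eq_sum_offDiag {α M : Type*} [Fintype α] [DecidableEq α] [AddCommMonoid M]
    (F : α → α → M) :
    ∑ k, ∑ ℓ, (if k = ℓ then 0 else F k ℓ) = ∑ p ∈ (univ : Finset α).offDiag, F p.1 p.2 := by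
  have : (univ : Finset α).offDiag = (univ ×ˢ univ).filter (fun p => p.1 ≠ p.2) := by
    ext; simp
  rw [this, sum_filter, sum_product]
  simp only [ite_not]

theorem card_offDiag_univ_fin (N : ℕ) : (univ : Finset (Fin N)).offDiag.card = N * (N - 1) := by
  rw [offDiag_card, card_univ, Fintype.card_fin, Nat.mul_sub_one]

theorem energyProd_eq_sum_offDiag {N d : ℕ} (f : ℝ → ℝ) (y : Fin N → Fin d → ℝ) :
    energyProd f y = ∑ p ∈ (univ : Finset (Fin N)).offDiag, ∏ i, f (y p.1 i - y p.2 i) :=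
  sum_sum_ite_eq_sum_offDiag _

theorem sum_energy1_eq_sum_offDiag {N d : ℕ} (g : ℝ → ℝ) (y : Fin N → Fin d → ℝ) :
    ∑ i, energy1 g (fun k => y k i) =
      ∑ p ∈ (univ : Finset (Fin N)).offDiag, ∑ i, g (y p.1 i - y p.2 i) := by
  simp only [energy1, sum_sum_ite_eq_sum_offDiag]
  exact sum_comm

theorem energyProd_ge_of_sum_energy1_log_ge {N d : ℕ} {f : ℝ → ℝ} (hf_pos : ∀ t, 0 < f t)
    (y : Fin N → Fin d → ℝ) {m : ℝ}
    (h : (N * (N - 1) : ℕ) * m ≤ ∑ i, energy1 (fun t => log (f t)) (fun k => y k i)) :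
    (N * (N - 1) : ℕ) * exp m ≤ energyProd f y := by
  have hprod : ∀ p : Fin N × Fin N,
      ∏ i, f (y p.1 i - y p.2 i) = exp (∑ i, log (f (y p.1 i - y p.2 i))) := fun p => by
    simp only [exp_sum, exp_log (hf_pos _)]
  rw [sum_energy1_eq_sum_offDiag, ← card_offDiag_univ_fin] at h
  rw [energyProd_eq_sum_offDiag, ← card_offDiag_univ_fin, sum_congr rfl fun p _ => hprod p]
  exact card_mul_exp_le_sum_exp _ _ h

theorem apply_neg_of_periodic_of_symm {f : ℝ → ℝ} (hper : Function.Periodic f 1)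
    (hsymm : ∀ t, f t = f (1 - t)) (t : ℝ) : f (-t) = f t := by
  rw [← hper, hsymm (-t + 1)]; ring_nf

theorem energy1_equispaced_five {g : ℝ → ℝ} (hper : Function.Periodic g 1)
    (hsymm : ∀ t, g t = g (1 - t)) :
    energy1 g (fun k : Fin 5 => ((k : ℕ) : ℝ) / 5) = 10 * g (1/5) + 10 * g (2/5) := by
  have h4 : g (4/5) = g (1/5) := by rw [hsymm]; norm_num
  have h3 : g (3/5) = g (2/5) := by rw [hsymm]; norm_num
  simp only [energy1, Fin.sum_univ_five, Fin.isValue, Fin.reduceEq, ↓reduceIte]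
  norm_num [apply_neg_of_periodic_of_symm hper hsymm, h4, h3]
  ring

theorem energyProd_fibonacci5 {f : ℝ → ℝ} (hper : Function.Periodic f 1)
    (hsymm : ∀ t, f t = f (1 - t)) :
    energyProd f fibonacci5 = 20 * f (1/5) * f (2/5) := by
  have h4 : f (4/5) = f (1/5) := by rw [hsymm]; norm_num
  have h3 : f (3/5) = f (2/5) := by rw [hsymm]; norm_num
  simp only [energyProd, fibonacci5, Fin.sum_univ_five, Fin.prod_univ_two, Fin.isValue,
    Fin.reduceEq, ↓reduceIte, Matrix.cons_val]
  norm_num [apply_neg_of_periodic_of_symm hper hsymm, h4, h3]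
  ring

/-- Universal optimality of the 5-point Fibonacci lattice: if `f : 𝕋 → (0,∞)`
is a potential with `log f` 5-equispacing, then `Φ_5` minimizes the tensor
product energy `E_F` among all 5-point configurations in `𝕋²`, and
`E_F(Φ_5) = 20 f(1/5) f(2/5)`. -/
theorem fibonacci5_minimizes (f : ℝ → ℝ)
    (hf_pos : ∀ t, 0 < f t)
    (hf_per : Function.Periodic f 1)
    (hf_even : ∀ t, f t = f (1 - t))
    (hequi : NEquispacing 5 (fun t => Real.log (f t))) :
    energyProd f fibonacci5 = 20 * f (1/5) * f (2/5) ∧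
    ∀ y : Fin 5 → Fin 2 → ℝ, (∀ k i, y k i ∈ Set.Ico (0 : ℝ) 1) →
      energyProd f y ≥ energyProd f fibonacci5 := by
  refine ⟨energyProd_fibonacci5 hf_per hf_even, fun y hy => ?_⟩
  have hlog_equi : energy1 (fun t => log (f t)) (fun k : Fin 5 => ((k : ℕ) : ℝ) / 5) =
      10 * log (f (1/5)) + 10 * log (f (2/5)) :=
    energy1_equispaced_five (hf_per.comp log) fun t => congrArg log (hf_even t)
  have hcoord : ∀ i, 10 * log (f (1/5)) + 10 * log (f (2/5)) ≤
      energy1 (fun t => log (f t)) (fun k => y k i) := fun i => by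
    simpa [hlog_equi] using hequi (fun k => y k i) (fun k => hy k i)
  have hexp : exp (log (f (1/5)) + log (f (2/5))) = f (1/5) * f (2/5) := by
    rw [exp_add, exp_log (hf_pos _), exp_log (hf_pos _)]
  have hbound := energyProd_ge_of_sum_energy1_log_ge hf_pos y (m := log (f (1/5)) + log (f (2/5)))
    (by norm_num [Fin.sum_univ_two]; linarith [hcoord 0, hcoord 1])
  rw [energyProd_fibonacci5 hf_per hf_even]
  norm_num [hexp] at hbound
  linarith
end
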